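/- arXiv:1501.07541 — 4 statements merged into one kernel-verified Lean document; each statement's English description precedes it below -/
import Mathlib

section
/- The (N-1)×(N-1) symmetric tridiagonal matrix E with entries E_{j,k} = √(j(N-j)) √(k(N-k)) (2δ_{j,k} - δ_{j+1,k} - δ_{j-1,k}) has eigenvalues exactly k(k+1) for k = 1, …, N-1. In particular, E is positive definite. -/
/-!
Write `E = D T D` with `D = diag √(j (N - j))` and `T` the Dirichlet Laplacian of the path
`1, …, N - 1`. For `g = x^(k+1) (N - x)` the vector `(j (N - j) j^k)_j = D² (j^k)_j` samples `g`,
which vanishes at `0` and `N`, so `T` acts on it as `-Δ²` even in the boundary rows. Hence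
conjugating `E` by `D V`, with `V` the Vandermonde matrix at the nodes `1, …, N - 1`, gives the
matrix of `q ↦ -Δ²(x (N - x) q)` on polynomials of degree `< N - 1` in the monomial basis. That
operator does not raise degrees and multiplies the leading coefficient of `x^k` by
`(k + 1)(k + 2)`, so its matrix is upper triangular with these diagonal entries. Being
symmetric with positive spectrum, `E` is positive definite.
-/

open Matrix Polynomial

namespace Polynomial

variable {R : Type*} [CommRing R]

noncomputable def secondDiff (p : R[X]) : R[X] := p.comp (X + 1) - 2 * p + p.comp (X - 1)

lemma eval_secondDiff (p : R[X]) (x : R) :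
    (secondDiff p).eval x = p.eval (x + 1) - 2 * p.eval x + p.eval (x - 1) := by
  simp [secondDiff]

lemma coeff_secondDiff_X_pow (n k : ℕ) :
    (secondDiff (X ^ n : R[X])).coeff k
      = (n.choose k : R) * (1 + (-1) ^ (n - k)) - if k = n then 2 else 0 := by
  have h₁ : (X + 1 : R[X]) = X + C 1 := by simp
  have h₂ : (X - 1 : R[X]) = X + C (-1) := by simp [sub_eq_add_neg]
  simp only [secondDiff, X_pow_comp, h₁, h₂, coeff_sub, coeff_add, coeff_X_add_C_pow, one_pow,
    coeff_ofNat_mul, coeff_X_pow]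
  split_ifs <;> ring

lemma coeff_secondDiff_X_pow_of_le {n k : ℕ} (h : n ≤ k + 1) :
    (secondDiff (X ^ n : R[X])).coeff k = 0 := by
  rw [coeff_secondDiff_X_pow]
  obtain rfl | rfl | hk : k + 1 = n ∨ k = n ∨ n < k := by omega
  · simp
  · norm_num
  · simp [Nat.choose_eq_zero_of_lt hk, hk.ne']

lemma coeff_secondDiff_X_pow_add_two (k : ℕ) :
    (secondDiff (X ^ (k + 2) : R[X])).coeff k = (k + 1) * (k + 2) := by
  rw [coeff_secondDiff_X_pow, if_neg (by omega), show k + 2 - k = 2 by omega,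
    Nat.choose_symm_of_eq_add rfl]
  have h : 2 * (k + 2).choose 2 = (k + 2) * (k + 1) := by
    rw [Nat.choose_two_right]
    exact Nat.mul_div_cancel' (Nat.even_mul_pred_self _).two_dvd
  have h' : 2 * ((k + 2).choose 2 : R) = (k + 2) * (k + 1) := by
    simpa using congrArg (Nat.cast : ℕ → R) h
  linear_combination h'

lemma secondDiff_X_pow_mul_C_sub_X (c : R) (k : ℕ) :
    secondDiff (X ^ (k + 1) * (C c - X))
      = C c * secondDiff (X ^ (k + 1)) - secondDiff (X ^ (k + 2)) := by
  simp only [secondDiff, mul_comp, sub_comp, C_comp, X_comp, pow_comp]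
  ring

lemma coeff_secondDiff_X_pow_mul_C_sub_X_of_lt (c : R) {k i : ℕ} (h : k < i) :
    (secondDiff (X ^ (k + 1) * (C c - X))).coeff i = 0 := by
  rw [secondDiff_X_pow_mul_C_sub_X, coeff_sub, coeff_C_mul,
    coeff_secondDiff_X_pow_of_le (by omega), coeff_secondDiff_X_pow_of_le (by omega), mul_zero,
    sub_zero]

lemma coeff_secondDiff_X_pow_mul_C_sub_X_self (c : R) (k : ℕ) :
    (secondDiff (X ^ (k + 1) * (C c - X))).coeff k = -(((k : R) + 1) * (k + 2)) := by
  rw [secondDiff_X_pow_mul_C_sub_X, coeff_sub, coeff_C_mul,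
    coeff_secondDiff_X_pow_of_le (by omega), coeff_secondDiff_X_pow_add_two, mul_zero, zero_sub]

lemma natDegree_secondDiff_X_pow_mul_C_sub_X_le (c : R) (k : ℕ) :
    (secondDiff (X ^ (k + 1) * (C c - X))).natDegree ≤ k :=
  natDegree_le_iff_coeff_eq_zero.mpr fun _ h => coeff_secondDiff_X_pow_mul_C_sub_X_of_lt c h

end Polynomial

lemma spectrum_eq_of_mul_eq_mul {R A : Type*} [CommSemiring R] [Ring A] [Algebra R A]
    {a b p : A} (hp : IsUnit p) (h : a * p = p * b) : spectrum R a = spectrum R b := by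
  obtain ⟨u, rfl⟩ := hp
  rw [← spectrum.units_conjugate (u := u) (a := b), ← h, Units.mul_inv_cancel_right]

lemma Matrix.spectrum_eq_range_diag_of_isUpperTriangular {K n : Type*} [Field K] [Fintype n]
    [DecidableEq n] [LinearOrder n] {M : Matrix n n K} (h : M.IsUpperTriangular) :
    spectrum K M = Set.range M.diag := by
  ext μ
  simp only [mem_spectrum_iff_isRoot_charpoly, charpoly_of_isUpperTriangular _ h, IsRoot.def,
    eval_prod, eval_sub, eval_X, eval_C, Finset.prod_eq_zero_iff, Finset.mem_univ, true_and,
    sub_eq_zero, Set.mem_range, diag_apply]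
  exact exists_congr fun _ => eq_comm

section DirichletLaplacian

variable {R : Type*} [Ring R] {n : ℕ}

def shiftMatrix (n : ℕ) : Matrix (Fin n) (Fin n) R :=
  of fun a b => if (b : ℕ) = a + 1 then 1 else 0

def dirichletLaplacian (n : ℕ) : Matrix (Fin n) (Fin n) R :=
  2 - shiftMatrix n - (shiftMatrix n)ᵀ

lemma shiftMatrix_mulVec {g : ℕ → R} (hg : g (n + 1) = 0) (a : Fin n) :
    (shiftMatrix n *ᵥ fun b => g (b + 1)) a = g (a + 2) := by
  simp only [mulVec, dotProduct, shiftMatrix, of_apply, ite_mul, one_mul, zero_mul]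
  rw [Fin.sum_univ_eq_sum_range (fun m => if m = a + 1 then g (m + 1) else 0),
    Finset.sum_ite_eq']
  simp only [Finset.mem_range]
  split_ifs with h
  · rfl
  · rw [show (a : ℕ) + 2 = n + 1 by omega, hg]

lemma transpose_shiftMatrix_mulVec {g : ℕ → R} (hg : g 0 = 0) (a : Fin n) :
    ((shiftMatrix n)ᵀ *ᵥ fun b => g (b + 1)) a = g a := by
  simp only [mulVec, dotProduct, transpose_apply, shiftMatrix, of_apply, ite_mul, one_mul,
    zero_mul]
  rw [Fin.sum_univ_eq_sum_range (fun m => if (a : ℕ) = m + 1 then g (m + 1) else 0)]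
  obtain ⟨a, ha⟩ := a
  cases a with
  | zero => simp [hg]
  | succ a =>
    simp only [Nat.add_right_cancel_iff]
    rw [Finset.sum_ite_eq, if_pos (Finset.mem_range.mpr (by omega))]

lemma dirichletLaplacian_mulVec {g : ℕ → R} (h₀ : g 0 = 0) (hn : g (n + 1) = 0) (a : Fin n) :
    (dirichletLaplacian n *ᵥ fun b => g (b + 1)) a = 2 * g (a + 1) - g a - g (a + 2) := by
  simp only [dirichletLaplacian, sub_mulVec, Pi.sub_apply, shiftMatrix_mulVec hn,
    transpose_shiftMatrix_mulVec h₀]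
  simpa using sub_right_comm _ _ _

end DirichletLaplacian

section Conjugation

variable {R : Type*} [CommRing R]

/-- The matrix of `q ↦ -Δ²(X (c - X) q)` on polynomials of degree `< n`, in the basis
`1, X, …, X^(n-1)`. -/
noncomputable def laplacianCoeffMatrix (c : R) (n : ℕ) : Matrix (Fin n) (Fin n) R :=
  of fun i k => -(secondDiff (X ^ ((k : ℕ) + 1) * (C c - X))).coeff i

lemma laplacianCoeffMatrix_isUpperTriangular (c : R) (n : ℕ) :
    (laplacianCoeffMatrix c n).IsUpperTriangular := fun i k h => by
  rw [laplacianCoeffMatrix, of_apply,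
    coeff_secondDiff_X_pow_mul_C_sub_X_of_lt c (show (k : ℕ) < i from h), neg_zero]

lemma laplacianCoeffMatrix_diag (c : R) (n : ℕ) :
    (laplacianCoeffMatrix c n).diag = fun i : Fin n => ((i : R) + 1) * (i + 2) := by
  ext i
  simp [laplacianCoeffMatrix, coeff_secondDiff_X_pow_mul_C_sub_X_self]

/-- `pathWeight N a = j (N - j)` for `j = a + 1`: `Fin (N - 1)` indexes `1, …, N - 1` from `0`. -/
def pathWeight (N : ℕ) (a : Fin (N - 1)) : R := ((a : R) + 1) * (N - (a + 1))

lemma dirichletLaplacian_mul_diagonal_pathWeight_mul_vandermonde (N : ℕ) :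
    dirichletLaplacian (N - 1) * (diagonal (pathWeight N) * vandermonde fun a => (a : R) + 1)
      = (vandermonde fun a => (a : R) + 1) * laplacianCoeffMatrix (N : R) (N - 1) := by
  ext a k
  set p : R[X] := X ^ ((k : ℕ) + 1) * (C (N : R) - X)
  have hN : N - 1 + 1 = N := by have := a.isLt; omega
  have hcol (b : Fin (N - 1)) : (diagonal (pathWeight N) * vandermonde fun a => (a : R) + 1 :
      Matrix (Fin (N - 1)) (Fin (N - 1)) R) b k = p.eval ((b + 1 : ℕ) : R) := by
    simp only [diagonal_mul, pathWeight, vandermonde_apply, Nat.cast_add, Nat.cast_one,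
      map_natCast, eval_mul, eval_pow, eval_X, eval_sub, eval_natCast, p]
    ring
  change (dirichletLaplacian (N - 1) *ᵥ fun b => _) a = _
  simp_rw [hcol]
  rw [dirichletLaplacian_mulVec (g := fun m => p.eval (m : R)) (by simp [p]) (by simp [p, hN])]
  have hdeg : (-secondDiff p).natDegree < N - 1 :=
    (natDegree_neg _).trans_le (natDegree_secondDiff_X_pow_mul_C_sub_X_le _ _) |>.trans_lt k.isLt
  have heval := eval_eq_sum_range' hdeg ((a : R) + 1)
  rw [eval_neg, eval_secondDiff,
    ← Fin.sum_univ_eq_sum_range (fun i => (-secondDiff p).coeff i * ((a : R) + 1) ^ i)] at heval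
  simp only [mul_apply, vandermonde_apply, laplacianCoeffMatrix, of_apply, coeff_neg] at heval ⊢
  simp only [add_sub_cancel_right, add_assoc, one_add_one_eq_two] at heval
  push_cast
  have hcomm : ∑ j : Fin (N - 1), ((a : R) + 1) ^ (j : ℕ) * -(secondDiff p).coeff j
      = ∑ j : Fin (N - 1), -(secondDiff p).coeff j * ((a : R) + 1) ^ (j : ℕ) :=
    Finset.sum_congr rfl fun _ _ => mul_comm _ _
  linear_combination heval - hcomm

end Conjugation

lemma pathWeight_pos {N : ℕ} (a : Fin (N - 1)) : 0 < (pathWeight N a : ℝ) := by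
  have : (a : ℝ) + 1 < N := by exact_mod_cast (show (a : ℕ) + 1 < N by omega)
  have : (0 : ℝ) ≤ a := a.val.cast_nonneg
  unfold pathWeight
  nlinarith

lemma eq_diagonal_mul_dirichletLaplacian_mul_diagonal {N : ℕ}
    {E : Matrix (Fin (N - 1)) (Fin (N - 1)) ℝ} (hsym : E.IsSymm)
    (hdiag : ∀ i : Fin (N - 1), E i i = 2 * (i.val + 1 : ℝ) * ((N : ℝ) - (i.val + 1)))
    (hsup : ∀ i k : Fin (N - 1), k.val = i.val + 1 →
      E i k = -Real.sqrt ((i.val + 1 : ℝ) * ((N : ℝ) - (i.val + 1))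
        * (i.val + 2 : ℝ) * ((N : ℝ) - (i.val + 2))))
    (hzero : ∀ i k : Fin (N - 1), i.val + 2 ≤ k.val → E i k = 0) :
    E = diagonal (fun a => √(pathWeight N a)) * dirichletLaplacian (N - 1)
      * diagonal fun a => √(pathWeight N a) := by
  have hE (i j : Fin (N - 1)) : E i j = E j i := by simpa using congrFun (congrFun hsym j) i
  have hw (i : Fin (N - 1)) : 0 ≤ ((i : ℝ) + 1) * (N - (i + 1)) := (pathWeight_pos i).le
  have hsqrt (i : Fin (N - 1)) :
      √(((i : ℝ) + 1) * (N - (i + 1))) * √(((i : ℝ) + 1 + 1) * (N - (i + 1 + 1)))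
        = √(((i : ℝ) + 1) * (N - (i + 1)) * (i + 2) * (N - (i + 2))) := by
    rw [← Real.sqrt_mul (hw i)]
    ring_nf
  ext i j
  simp only [diagonal_mul, mul_diagonal, dirichletLaplacian, shiftMatrix, Matrix.sub_apply,
    transpose_apply, of_apply, ofNat_apply, pathWeight]
  obtain h | h | h | h | h : i = j ∨ (j : ℕ) = i + 1 ∨ (i : ℕ) = j + 1 ∨ (i : ℕ) + 2 ≤ j ∨
      (j : ℕ) + 2 ≤ i := by omega
  · subst h
    simp (disch := omega) only [if_neg, if_true, Nat.cast_ofNat]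
    linear_combination hdiag i - 2 * Real.mul_self_sqrt (hw i)
  · have hj : ((j : ℕ) : ℝ) = i + 1 := by exact_mod_cast h
    simp (disch := omega) only [if_pos, if_neg, Fin.ext_iff, hsup i j h, hj,
      Nat.cast_zero]
    linear_combination hsqrt i
  · have hi : ((i : ℕ) : ℝ) = j + 1 := by exact_mod_cast h
    simp (disch := omega) only [if_pos, if_neg, Fin.ext_iff, hE i j, hsup j i h, hi,
      Nat.cast_zero]
    linear_combination hsqrt j
  · simp (disch := omega) only [if_neg, Fin.ext_iff, hzero i j h]
    ring
  · simp (disch := omega) only [if_neg, Fin.ext_iff, hE i j, hzero j i h]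
    ring

lemma spectrum_diagonal_mul_dirichletLaplacian_mul_diagonal (N : ℕ) :
    spectrum ℝ (diagonal (fun a => √(pathWeight N a)) * dirichletLaplacian (N - 1)
      * diagonal fun a => √(pathWeight N a))
      = Set.range fun i : Fin (N - 1) => ((i : ℝ) + 1) * (i + 2) := by
  set D : Matrix (Fin (N - 1)) (Fin (N - 1)) ℝ := diagonal fun a => √(pathWeight N a)
  set V : Matrix (Fin (N - 1)) (Fin (N - 1)) ℝ := vandermonde fun a => (a : ℝ) + 1
  have hDD : D * D = diagonal (pathWeight N) := by
    rw [diagonal_mul_diagonal]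
    exact congrArg diagonal (funext fun a => Real.mul_self_sqrt (pathWeight_pos a).le)
  have hP : IsUnit (D * V) := by
    rw [isUnit_iff_isUnit_det, det_mul, isUnit_iff_ne_zero]
    refine mul_ne_zero ?_ (det_vandermonde_ne_zero_iff.mpr fun a b h => ?_)
    · rw [det_diagonal]
      exact Finset.prod_ne_zero_iff.mpr fun a _ => (Real.sqrt_pos.mpr (pathWeight_pos a)).ne'
    · simpa [Fin.ext_iff] using h
  have hconj : D * dirichletLaplacian (N - 1) * D * (D * V)
      = D * V * laplacianCoeffMatrix (N : ℝ) (N - 1) := by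
    rw [mul_assoc D V, ← dirichletLaplacian_mul_diagonal_pathWeight_mul_vandermonde, ← hDD]
    simp only [mul_assoc, V]
  rw [spectrum_eq_of_mul_eq_mul hP hconj,
    spectrum_eq_range_diag_of_isUpperTriangular (laplacianCoeffMatrix_isUpperTriangular _ _),
    laplacianCoeffMatrix_diag]

theorem E_matrix_eigenvalues_general
    (N : ℕ)
    (E : Matrix (Fin (N - 1)) (Fin (N - 1)) ℝ)
    (hsym : E.IsSymm)
    (hdiag : ∀ i : Fin (N - 1),
      E i i = 2 * (i.val + 1 : ℝ) * ((N : ℝ) - (i.val + 1)))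
    (hsup : ∀ i k : Fin (N - 1), k.val = i.val + 1 →
      E i k = -Real.sqrt ((i.val + 1 : ℝ) * ((N : ℝ) - (i.val + 1))
        * (i.val + 2 : ℝ) * ((N : ℝ) - (i.val + 2))))
    (hzero : ∀ i k : Fin (N - 1), i.val + 2 ≤ k.val → E i k = 0) :
    spectrum ℝ E = {t : ℝ | ∃ k : ℕ, 1 ≤ k ∧ k ≤ N - 1 ∧ t = (k : ℝ) * (k + 1)}
    ∧ E.PosDef := by
  have hrange : (Set.range fun i : Fin (N - 1) => ((i : ℝ) + 1) * (i + 2))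
      = {t : ℝ | ∃ k : ℕ, 1 ≤ k ∧ k ≤ N - 1 ∧ t = (k : ℝ) * (k + 1)} := by
    ext t
    constructor
    · rintro ⟨i, rfl⟩
      exact ⟨i + 1, by omega, by omega, by push_cast; ring⟩
    · rintro ⟨k, hk₁, hk₂, rfl⟩
      refine ⟨⟨k - 1, by omega⟩, ?_⟩
      simp only [Nat.cast_sub hk₁]
      ring
  have hspec : spectrum ℝ E = {t : ℝ | ∃ k : ℕ, 1 ≤ k ∧ k ≤ N - 1 ∧ t = (k : ℝ) * (k + 1)} := by
    rw [eq_diagonal_mul_dirichletLaplacian_mul_diagonal hsym hdiag hsup hzero,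
      spectrum_diagonal_mul_dirichletLaplacian_mul_diagonal, hrange]
  have hherm : E.IsHermitian := isHermitian_iff_isSymm.mpr hsym
  refine ⟨hspec, hherm.posDef_iff_eigenvalues_pos.mpr fun i => ?_⟩
  obtain ⟨k, hk, -, hi⟩ := hspec ▸ hherm.eigenvalues_mem_spectrum_real i
  have : (0 : ℝ) < k := by exact_mod_cast hk
  rw [hi]
  positivity

/-- The tridiagonal matrix `E_{N-1}` with entries
`E_{j,k} = √(j(N-j))√(k(N-k))(2δ_{j,k} - δ_{j+1,k} - δ_{j-1,k})`
has eigenvalues exactly `k(k+1)`, `k = 1,…,N-1`, and is positive definite. -/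
theorem E_matrix_eigenvalues
    (N : ℕ) (hN : 2 ≤ N)
    (E : Matrix (Fin (N - 1)) (Fin (N - 1)) ℝ)
    (hsym : E.IsSymm)
    (hdiag : ∀ i : Fin (N - 1),
      E i i = 2 * (i.val + 1 : ℝ) * ((N : ℝ) - (i.val + 1)))
    (hsup : ∀ i k : Fin (N - 1), k.val = i.val + 1 →
      E i k = -Real.sqrt ((i.val + 1 : ℝ) * ((N : ℝ) - (i.val + 1))
        * (i.val + 2 : ℝ) * ((N : ℝ) - (i.val + 2))))
    (hzero : ∀ i k : Fin (N - 1), i.val + 2 ≤ k.val → E i k = 0) :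
    spectrum ℝ E = {t : ℝ | ∃ k : ℕ, 1 ≤ k ∧ k ≤ N - 1 ∧ t = (k : ℝ) * (k + 1)}
    ∧ E.PosDef :=
  E_matrix_eigenvalues_general N E hsym hdiag hsup hzero
end

section
/- With the embedded su(2) ansatz ω_j = ω √(j(N-j)), the stability inequalities ω_j² ≥ 1 + (1/2)(ω_{j-1}² + ω_{j+1}²) for all j = 1,…,N-1 hold if and only if ω² ≥ 1. -/
/-- With `ωⱼ = ω √(j(N-j))`, the stability inequalities
`ωⱼ² ≥ 1 + (1/2)(ωⱼ₋₁² + ωⱼ₊₁²)` for `j = 1,…,N-1` hold iff `ω² ≥ 1`. -/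
theorem su2_embedding_stability_iff
    (N : ℕ) (hN : 2 ≤ N) (ω : ℝ)
    (ωj : ℕ → ℝ)
    (hωj : ∀ j : ℕ, j ≤ N → ωj j = ω * Real.sqrt ((j : ℝ) * ((N : ℝ) - j))) :
    (∀ j : ℕ, 1 ≤ j → j ≤ N - 1 →
      (ωj j) ^ 2 ≥ 1 + (1 / 2) * ((ωj (j - 1)) ^ 2 + (ωj (j + 1)) ^ 2))
    ↔ ω ^ 2 ≥ 1 := by
  have hsq : ∀ a : ℝ, 0 ≤ a → (ω * Real.sqrt a) ^ 2 = ω ^ 2 * a := by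
    intro a ha
    rw [mul_pow, Real.sq_sqrt ha]
  have hNR : (2 : ℝ) ≤ (N : ℝ) := by exact_mod_cast hN
  constructor
  · intro h
    have h1 := h 1 le_rfl (by omega)
    rw [hωj 1 (by omega), hωj 0 (by omega), hωj 2 hN] at h1
    simp only [Nat.cast_one, Nat.cast_zero, Nat.cast_ofNat] at h1
    rw [hsq _ (by nlinarith), hsq _ (by nlinarith), hsq _ (by nlinarith)] at h1
    nlinarith
  · intro h j hj1 hj2
    have hjN : j + 1 ≤ N := by omega
    have hx1 : (1 : ℝ) ≤ (j : ℝ) := by exact_mod_cast hj1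
    have hxN : (j : ℝ) + 1 ≤ (N : ℝ) := by exact_mod_cast hjN
    rw [hωj j (by omega), hωj (j - 1) (by omega), hωj (j + 1) hjN]
    have hc1 : ((j - 1 : ℕ) : ℝ) = (j : ℝ) - 1 := by
      rw [Nat.cast_sub hj1]; norm_num
    have hc2 : ((j + 1 : ℕ) : ℝ) = (j : ℝ) + 1 := by push_cast; ring
    rw [hc1, hc2]
    rw [hsq _ (by nlinarith), hsq _ (by nlinarith), hsq _ (by nlinarith)]
    nlinarith
end

section
/- For the matrix C with entries C_{j,j+1} = ω_j (real) and D = Diag(N+1-2j), the commutator [C, C^H] is the diagonal matrix with entries ([C,C^H])_{j,j} = ω_j² - ω_{j-1}² (with ω_0 = ω_N = 0). Moreover, [C, C^H] = D if and only if ω_j² = j(N-j) for all j = 1,…,N-1. -/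
open Matrix

/-- For `C` with entries `C_{j,j+1} = ωⱼ` (real), the commutator
`[C, Cᵀ]` is the diagonal matrix with entries `ωⱼ² - ωⱼ₋₁²`, and `[C, Cᵀ] = D`
iff `ωⱼ² = j(N-j)` for all `j = 1,…,N-1`. -/
theorem C_CH_commutator
    (N : ℕ) (hN : 2 ≤ N)
    (ω : ℕ → ℝ) (hω0 : ω 0 = 0) (hωN : ω N = 0)
    (C : Matrix (Fin N) (Fin N) ℝ)
    (hC : ∀ j k : Fin N, C j k = if k.val = j.val + 1 then ω (j.val + 1) else 0)
    (D : Matrix (Fin N) (Fin N) ℝ)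
    (hD : D = Matrix.diagonal (fun j : Fin N => (N : ℝ) + 1 - 2 * (j.val + 1))) :
    (C * Cᵀ - Cᵀ * C
      = Matrix.diagonal (fun j : Fin N => (ω (j.val + 1)) ^ 2 - (ω j.val) ^ 2))
    ∧ (C * Cᵀ - Cᵀ * C = D ↔
        ∀ j : ℕ, 1 ≤ j → j ≤ N - 1 → (ω j) ^ 2 = (j : ℝ) * ((N : ℝ) - j)) := by
  have h1 : ∀ i k : Fin N, (C * Cᵀ) i k = if i = k then ω (i.val+1)^2 else 0 := by
    intro i k
    simp only [mul_apply, transpose_apply, hC]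
    by_cases h : i = k
    · subst h
      by_cases hi : i.val + 1 < N
      · rw [Finset.sum_eq_single (⟨i.val+1, hi⟩ : Fin N)]
        · simp [sq]
        · intro m _ hm
          have : ¬ m.val = i.val + 1 := by
            intro hv; apply hm; exact Fin.ext hv
          simp [this]
        · simp
      · have hiN : i.val + 1 = N := by omega
        rw [Finset.sum_eq_zero, if_pos rfl]
        · rw [hiN, hωN]; ring
        · intro m _
          have : ¬ m.val = i.val + 1 := by have := m.isLt; omega
          simp [this]
    · rw [Finset.sum_eq_zero, if_neg h]
      intro m _
      by_cases hm : m.val = i.val + 1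
      · have : ¬ m.val = k.val + 1 := by
          intro hk; apply h; apply Fin.ext; omega
        simp [this]
      · simp [hm]
  have h2 : ∀ i k : Fin N, (Cᵀ * C) i k = if i = k then ω i.val ^2 else 0 := by
    intro i k
    simp only [mul_apply, transpose_apply, hC]
    by_cases h : i = k
    · subst h
      by_cases hi : 1 ≤ i.val
      · have hlt : i.val - 1 < N := by omega
        rw [Finset.sum_eq_single (⟨i.val-1, hlt⟩ : Fin N)]
        · have : i.val = i.val - 1 + 1 := by omega
          rw [← this]; simp [sq]
        · intro m _ hm
          have : ¬ i.val = m.val + 1 := by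
            intro hv
            apply hm; apply Fin.ext; simp; omega
          simp [this]
        · simp
      · have hi0 : i.val = 0 := by omega
        rw [Finset.sum_eq_zero, if_pos rfl]
        · rw [hi0, hω0]; ring
        · intro m _
          have : ¬ i.val = m.val + 1 := by omega
          simp [this]
    · rw [Finset.sum_eq_zero, if_neg h]
      intro m _
      by_cases hm : i.val = m.val + 1
      · have : ¬ k.val = m.val + 1 := by
          intro hk; apply h; apply Fin.ext; omega
        simp [this]
      · simp [hm]
  have hmain : C * Cᵀ - Cᵀ * C
      = Matrix.diagonal (fun j : Fin N => (ω (j.val + 1)) ^ 2 - (ω j.val) ^ 2) := by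
    ext i k
    rw [Matrix.sub_apply, h1, h2, Matrix.diagonal_apply]
    by_cases h : i = k
    · subst h; simp
    · simp [h]
  refine ⟨hmain, ?_⟩
  rw [hmain, hD, Matrix.diagonal_eq_diagonal_iff]
  constructor
  · intro h
    have key : ∀ j : ℕ, j ≤ N - 1 → (ω j) ^ 2 = (j : ℝ) * ((N : ℝ) - j) := by
      intro j hj
      induction j with
      | zero => simp [hω0]
      | succ n ih =>
        have hn : n ≤ N - 1 := by omega
        have hlt : n < N := by omega
        have := h ⟨n, hlt⟩
        simp only at this
        have ihn := ih hn
        have : (ω (n+1))^2 = (ω n)^2 + ((N:ℝ) + 1 - 2 * (n + 1)) := by linarith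
        rw [this, ihn]
        push_cast
        ring
    intro j h1 h2; exact key j h2
  · intro h j
    have hjlt := j.isLt
    by_cases h0 : j.val = 0
    · have hω1 := h 1 le_rfl (by omega : 1 ≤ N - 1)
      push_cast at hω1
      simp only [h0, hω0]
      rw [hω1]
      push_cast; ring
    · by_cases htop : j.val = N - 1
      · have hωj : (ω j.val)^2 = (j.val:ℝ) * ((N:ℝ) - j.val) := h j.val (by omega) (by omega)
        have hN' : j.val + 1 = N := by omega
        rw [hN', hωN, hωj, htop]
        have : ((N:ℝ) - 1) = ((N - 1 : ℕ) : ℝ) := by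
          push_cast [Nat.cast_sub (by omega : 1 ≤ N)]; ring
        push_cast [Nat.cast_sub (by omega : 1 ≤ N)]
        ring
      · have hωj : (ω j.val)^2 = (j.val:ℝ) * ((N:ℝ) - j.val) := h j.val (by omega) (by omega)
        have hωj1 : (ω (j.val+1))^2 = ((j.val+1:ℕ):ℝ) * ((N:ℝ) - (j.val+1:ℕ)) :=
          h (j.val+1) (by omega) (by omega)
        rw [hωj, hωj1]
        push_cast
        ring
end

section
/- Consequently, if ω : [r₀, ∞) → ℝ satisfies the su(2) Yang–Mills equation as above with μ > 0 on (r₀,∞), and if at some point r₁ > r₀ one has ω(r₁) > 1 and ω'(r₁) > 0, then ω(r) > 1 and ω'(r) > 0 for all r ≥ r₁; in particular ω(r)² > 1 for all r ≥ r₁. -/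
open Set Filter Topology

/-- If `ω` solves the su(2) Yang–Mills equation with `μ > 0` and at
some `r₁ > r₀` one has `ω(r₁) > 1` and `ω'(r₁) > 0`, then `ω(r) > 1` and
`ω'(r) > 0` for all `r ≥ r₁`; in particular `ω(r)² > 1` for `r ≥ r₁`. -/
theorem su2_monotone_persistence
    (r₀ : ℝ) (hr₀pos : 0 < r₀) (μ F ω ω' ω'' : ℝ → ℝ)
    (hμcont : ContinuousOn μ (Set.Ici r₀)) (hFcont : ContinuousOn F (Set.Ici r₀))
    (hμpos : ∀ r ∈ Set.Ioi r₀, 0 < μ r)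
    (hω' : ∀ r ∈ Set.Ioi r₀, HasDerivAt ω (ω' r) r)
    (hω'' : ∀ r ∈ Set.Ioi r₀, HasDerivAt ω' (ω'' r) r)
    (heqn : ∀ r ∈ Set.Ioi r₀,
      r ^ 2 * μ r * ω'' r + F r * ω' r + (1 - (ω r) ^ 2) * ω r = 0)
    (r₁ : ℝ) (hr₁ : r₀ < r₁) (hω₁ : 1 < ω r₁) (hω'₁ : 0 < ω' r₁) :
    ∀ r : ℝ, r₁ ≤ r → 1 < ω r ∧ 0 < ω' r ∧ 1 < (ω r) ^ 2 := by
  have hω'cont : ∀ t ∈ Set.Ioi r₀, ContinuousAt ω' t := fun t ht =>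
    (hω'' t ht).continuousAt
  have hωcont : ∀ t ∈ Set.Ioi r₀, ContinuousAt ω t := fun t ht =>
    (hω' t ht).continuousAt
  -- key: ω' > 0 on all of [r₁, r]
  have key : ∀ r, r₁ ≤ r → ∀ t ∈ Set.Icc r₁ r, 0 < ω' t := by
    intro r hr
    by_contra hbad
    push_neg at hbad
    obtain ⟨t₀, ht₀, ht₀'⟩ := hbad
    set B : Set ℝ := {t ∈ Set.Icc r₁ r | ω' t ≤ 0} with hB
    have hBsub : B ⊆ Set.Icc r₁ r := fun x hx => hx.1
    have hBne : B.Nonempty := ⟨t₀, ht₀, ht₀'⟩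
    have hBbdd : BddBelow B := ⟨r₁, fun x hx => hx.1.1⟩
    have hsubIoi : ∀ x ∈ Set.Icc r₁ r, x ∈ Set.Ioi r₀ := fun x hx =>
      lt_of_lt_of_le hr₁ hx.1
    have hBclosed : IsClosed B := by
      have hcont : ContinuousOn ω' (Set.Icc r₁ r) := fun x hx =>
        (hω'cont x (hsubIoi x hx)).continuousWithinAt
      exact hcont.preimage_isClosed_of_isClosed isClosed_Icc isClosed_Iic
    set s := sInf B with hs
    have hsB : s ∈ B := hBclosed.csInf_mem hBne hBbdd
    have hsIcc : s ∈ Set.Icc r₁ r := hBsub hsB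
    have hsIoi : s ∈ Set.Ioi r₀ := hsubIoi s hsIcc
    have hr₁s : r₁ < s := by
      rcases lt_or_eq_of_le hsIcc.1 with h | h
      · exact h
      · exfalso; rw [← h] at hsB; exact absurd hsB.2 (not_le.mpr hω'₁)
    -- ω' > 0 on [r₁, s)
    have hpos : ∀ t ∈ Set.Ico r₁ s, 0 < ω' t := by
      intro t ht
      by_contra h
      push_neg at h
      have : t ∈ B := ⟨⟨ht.1, le_trans ht.2.le hsIcc.2⟩, h⟩
      exact absurd (csInf_le hBbdd this) (not_le.mpr ht.2)
    -- ω'(s) = 0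
    have hω's : ω' s = 0 := by
      refine le_antisymm hsB.2 ?_
      have htend : Tendsto ω' (𝓝[<] s) (𝓝 (ω' s)) :=
        ((hω'cont s hsIoi).continuousWithinAt)
      refine ge_of_tendsto htend ?_
      filter_upwards [Ioo_mem_nhdsLT_of_mem ⟨hr₁s, le_refl s⟩] with t ht
      exact (hpos t ⟨ht.1.le, ht.2⟩).le
    -- ω strictly increasing on [r₁, s], so ω s > 1
    have hmono : StrictMonoOn ω (Set.Icc r₁ s) := by
      apply strictMonoOn_of_deriv_pos (convex_Icc r₁ s)
      · exact fun x hx => (hωcont x (lt_of_lt_of_le hr₁ hx.1)).continuousWithinAt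
      · intro x hx
        rw [interior_Icc] at hx
        rw [(hω' x (lt_trans hr₁ hx.1)).deriv]
        exact hpos x ⟨hx.1.le, hx.2⟩
    have hωs : 1 < ω s :=
      lt_of_lt_of_le hω₁ (hmono.monotoneOn ⟨le_refl r₁, hr₁s.le⟩
        ⟨hr₁s.le, le_refl s⟩ hr₁s.le)
    -- ω''(s) ≤ 0 from left slopes
    have hω''le : ω'' s ≤ 0 := by
      have htend : Tendsto (slope ω' s) (𝓝[≠] s) (𝓝 (ω'' s)) :=
        hasDerivAt_iff_tendsto_slope.mp (hω'' s hsIoi)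
      have htend' : Tendsto (slope ω' s) (𝓝[<] s) (𝓝 (ω'' s)) :=
        htend.mono_left (nhdsWithin_mono s (fun x hx => ne_of_lt hx))
      refine le_of_tendsto htend' ?_
      filter_upwards [Ioo_mem_nhdsLT_of_mem ⟨hr₁s, le_refl s⟩] with t ht
      have h1 : 0 < ω' t := hpos t ⟨ht.1.le, ht.2⟩
      have h2 : t - s < 0 := sub_neg.mpr ht.2
      rw [slope_def_field, div_nonpos_iff]
      left
      exact ⟨by rw [hω's]; linarith, by linarith⟩
    -- contradiction from the ODE
    have heq := heqn s hsIoi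
    have hμs : 0 < μ s := hμpos s hsIoi
    have hspos : 0 < s := lt_trans hr₀pos hsIoi
    have hF0 : F s * ω' s = 0 := by rw [hω's]; ring
    have heq2 : s ^ 2 * μ s * ω'' s = (ω s ^ 2 - 1) * ω s := by
      linear_combination heq - hF0
    have hprod : 0 < (ω s ^ 2 - 1) * ω s := by nlinarith
    have hA : s ^ 2 * μ s * ω'' s ≤ 0 :=
      mul_nonpos_iff.mpr (Or.inl ⟨(mul_pos (pow_pos hspos 2) hμs).le, hω''le⟩)
    linarith
  -- conclude
  intro r hr
  have hω'r : 0 < ω' r := key r hr r ⟨hr, le_refl r⟩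
  have hωr : 1 < ω r := by
    rcases lt_or_eq_of_le hr with h | h
    · have hmono : StrictMonoOn ω (Set.Icc r₁ r) := by
        apply strictMonoOn_of_deriv_pos (convex_Icc r₁ r)
        · exact fun x hx => ((hω' x (lt_of_lt_of_le hr₁ hx.1)).continuousAt).continuousWithinAt
        · intro x hx
          rw [interior_Icc] at hx
          rw [(hω' x (lt_trans hr₁ hx.1)).deriv]
          exact key r hr x ⟨hx.1.le, hx.2.le⟩
      exact lt_of_lt_of_le hω₁ (hmono.monotoneOn ⟨le_refl r₁, h.le⟩ ⟨h.le, le_refl r⟩ h.le)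
    · rw [← h]; exact hω₁
  exact ⟨hωr, hω'r, by nlinarith⟩
end
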